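/- The wire boundary gadget has exactly two gadget solutions: (i) the partition of all six cells into the 2×2 block formed by rows 0 and 1 together with the 1×2 block formed by row 2 (covering the optional area), and (ii) the single 2×2 block formed by rows 0 and 1 (covering only the mandatory area). In particular, no set of valid blocks tiles the mandatory area together with exactly one cell of the optional area. -/

import Mathlib

/-- A cell of the integer grid. -/
abbrev Cell : Type := ℤ × ℤ

/-- Two cells are edge-adjacent. -/
def CellAdj (a b : Cell) : Prop :=
  (a.1 - b.1).natAbs + (a.2 - b.2).natAbs = 1

/-- A set of cells is edge-connected (within itself). -/
def ConnectedIn (S : Set Cell) : Prop :=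
  ∀ a ∈ S, ∀ b ∈ S,
    Relation.ReflTransGen (fun x y : Cell => x ∈ S ∧ y ∈ S ∧ CellAdj x y) a b

/-- A map of the grid composed of translations, rotations and reflections
    (an integer isometry given by an orthogonal integer matrix plus a translation). -/
def IsGridIsometry (f : Cell → Cell) : Prop :=
  ∃ a b c d e g : ℤ,
    a * a + b * b = 1 ∧ c * c + d * d = 1 ∧ a * c + b * d = 0 ∧
    ∀ p : Cell, f p = (a * p.1 + b * p.2 + e, c * p.1 + d * p.2 + g)

/-- Two sets of cells are congruent: equal up to translation, rotation and reflection. -/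
def CongruentCells (A B : Set Cell) : Prop :=
  ∃ f : Cell → Cell, IsGridIsometry f ∧ f '' A = B

/-- A (coloring and clue assignment of a) Double Choco board:
    each cell is white (`true`) or gray (`false`), and may carry a clue. -/
structure Board where
  white : Cell → Bool
  clue : Cell → Option ℕ

/-- The white cells of a set. -/
def Board.whitePart (bd : Board) (B : Set Cell) : Set Cell := {p ∈ B | bd.white p = true}

/-- The gray cells of a set. -/
def Board.grayPart (bd : Board) (B : Set Cell) : Set Cell := {p ∈ B | bd.white p = false}

/-- A valid Double Choco block: a finite edge-connected set of cells whose white part and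
    gray part are nonempty, edge-connected, and congruent (hence of equal size), and such
    that any clue `n` carried by a cell of the block forces the white part and the gray
    part to have exactly `n` cells each. -/
def ValidBlock (bd : Board) (B : Set Cell) : Prop :=
  B.Finite ∧ ConnectedIn B ∧
  (bd.whitePart B).Nonempty ∧ (bd.grayPart B).Nonempty ∧
  ConnectedIn (bd.whitePart B) ∧ ConnectedIn (bd.grayPart B) ∧
  CongruentCells (bd.whitePart B) (bd.grayPart B) ∧
  ∀ p ∈ B, ∀ n : ℕ, bd.clue p = some n →
    (bd.whitePart B).ncard = n ∧ (bd.grayPart B).ncard = n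

/-- A partition of `area` into pairwise disjoint valid blocks. -/
def IsBlockPartition (bd : Board) (blocks : Set (Set Cell)) (area : Set Cell) : Prop :=
  (∀ B ∈ blocks, ValidBlock bd B) ∧
  blocks.PairwiseDisjoint id ∧
  ⋃₀ blocks = area

/-- A gadget: a board together with a mandatory area and a collection of optional areas. -/
structure Gadget where
  board : Board
  mandatory : Set Cell
  optionals : Set (Set Cell)

/-- The entire area of a gadget. -/
def Gadget.area (G : Gadget) : Set Cell := G.mandatory ∪ ⋃₀ G.optionals

/-- A gadget solution: a partition into valid blocks of an assigned area containing the
    mandatory area, contained in the gadget, that fully covers or fully avoids each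
    optional area. -/
def IsGadgetSolution (G : Gadget) (area : Set Cell) (blocks : Set (Set Cell)) : Prop :=
  G.mandatory ⊆ area ∧ area ⊆ G.area ∧
  (∀ O ∈ G.optionals, O ⊆ area ∨ Disjoint O area) ∧
  IsBlockPartition G.board blocks area

/-- Row `j` of the (two cells wide) wire boundary gadget: cells `(0, j)` and `(1, j)`. -/
def wireRow (j : ℤ) : Set Cell := {((0 : ℤ), j), ((1 : ℤ), j)}

/-- The board of the wire boundary gadget: column 0 is white, column 1 is gray,
    the cells of rows 0 and 1 carry the clue 2 while the cells of row 2 carry no clue. -/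
def wbBoard : Board where
  white := fun p => decide (p.1 = 0)
  clue := fun p => if p.2 = 2 then none else some 2

/-- The wire boundary gadget: cells `{0,1} × {0,1,2}`; rows 0 and 1 form the mandatory
    area and row 2 is the single optional area. -/
def wbGadget : Gadget where
  board := wbBoard
  mandatory := wireRow 0 ∪ wireRow 1
  optionals := {wireRow 2}

/-!
Every cell of rows 0 and 1 carries the clue 2, so the white part of its block consists of two
of the three white cells of the gadget. Two such white parts cannot be disjoint, hence all four
clue cells lie in one block; having only two white and two gray cells, that block is exactly the
2×2 square of rows 0 and 1. Any other block then lies in row 2 and, needing a white and a gray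
cell, is all of row 2.
-/

open Set

lemma cellAdj_comm {a b : Cell} : CellAdj a b ↔ CellAdj b a := by
  unfold CellAdj; omega

lemma cellAdj_add_one_fst (x y : ℤ) : CellAdj (x, y) (x + 1, y) := by
  simp [CellAdj]

lemma cellAdj_add_one_snd (x y : ℤ) : CellAdj (x, y) (x, y + 1) := by
  simp [CellAdj]

lemma connectedIn_singleton (a : Cell) : ConnectedIn {a} := by
  rintro x rfl y rfl
  exact .refl

lemma ConnectedIn.union {S T : Set Cell} (hS : ConnectedIn S) (hT : ConnectedIn T)
    {a b : Cell} (ha : a ∈ S) (hb : b ∈ T) (hab : CellAdj a b) : ConnectedIn (S ∪ T) := by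
  set R := fun x y : Cell => x ∈ S ∪ T ∧ y ∈ S ∪ T ∧ CellAdj x y
  have hSR {x y} (hx : x ∈ S) (hy : y ∈ S) : Relation.ReflTransGen R x y :=
    Relation.ReflTransGen.mono (fun _ _ ⟨hu, hv, h⟩ => ⟨.inl hu, .inl hv, h⟩) _ _ (hS x hx y hy)
  have hTR {x y} (hx : x ∈ T) (hy : y ∈ T) : Relation.ReflTransGen R x y :=
    Relation.ReflTransGen.mono (fun _ _ ⟨hu, hv, h⟩ => ⟨.inr hu, .inr hv, h⟩) _ _ (hT x hx y hy)
  have hab' : Relation.ReflTransGen R a b := .single ⟨.inl ha, .inr hb, hab⟩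
  have hba : Relation.ReflTransGen R b a := .single ⟨.inr hb, .inl ha, cellAdj_comm.1 hab⟩
  rintro x (hx | hx) y (hy | hy)
  · exact hSR hx hy
  · exact (hSR hx ha).trans (hab'.trans (hTR hb hy))
  · exact (hTR hx hb).trans (hba.trans (hSR ha hy))
  · exact hTR hx hy

lemma congruentCells_image_add (A : Set Cell) (v : Cell) :
    CongruentCells A ((· + v) '' A) :=
  ⟨(· + v), ⟨1, 0, 0, 1, v.1, v.2, by norm_num, by norm_num, by norm_num,
    fun p => by simp [Prod.ext_iff]⟩, rfl⟩

lemma ValidBlock.ncard_whitePart {bd : Board} {B : Set Cell} (hB : ValidBlock bd B)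
    {p : Cell} (hp : p ∈ B) {n : ℕ} (hn : bd.clue p = some n) :
    (bd.whitePart B).ncard = n :=
  (hB.2.2.2.2.2.2.2 p hp n hn).1

lemma ValidBlock.ncard_grayPart {bd : Board} {B : Set Cell} (hB : ValidBlock bd B)
    {p : Cell} (hp : p ∈ B) {n : ℕ} (hn : bd.clue p = some n) :
    (bd.grayPart B).ncard = n :=
  (hB.2.2.2.2.2.2.2 p hp n hn).2

lemma Board.whitePart_mono (bd : Board) {A B : Set Cell} (h : A ⊆ B) :
    bd.whitePart A ⊆ bd.whitePart B :=
  fun _ hp => ⟨h hp.1, hp.2⟩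

lemma Board.grayPart_mono (bd : Board) {A B : Set Cell} (h : A ⊆ B) :
    bd.grayPart A ⊆ bd.grayPart B :=
  fun _ hp => ⟨h hp.1, hp.2⟩

lemma Board.whitePart_union_grayPart (bd : Board) (B : Set Cell) :
    bd.whitePart B ∪ bd.grayPart B = B := by
  ext p
  cases h : bd.white p <;> simp [Board.whitePart, Board.grayPart, h]

lemma Board.whitePart_union (bd : Board) (A B : Set Cell) :
    bd.whitePart (A ∪ B) = bd.whitePart A ∪ bd.whitePart B :=
  sep_union

lemma Board.grayPart_union (bd : Board) (A B : Set Cell) :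
    bd.grayPart (A ∪ B) = bd.grayPart A ∪ bd.grayPart B :=
  sep_union

lemma ValidBlock.eq_of_subset {bd : Board} {A B : Set Cell} (hA : ValidBlock bd A)
    (hB : ValidBlock bd B) (hAB : A ⊆ B) {p : Cell} (hp : p ∈ A) {n : ℕ}
    (hn : bd.clue p = some n) : A = B := by
  have hW : bd.whitePart A = bd.whitePart B :=
    eq_of_subset_of_ncard_le (bd.whitePart_mono hAB)
      (by rw [hA.ncard_whitePart hp hn, hB.ncard_whitePart (hAB hp) hn])
      (hB.1.subset (sep_subset _ _))
  have hG : bd.grayPart A = bd.grayPart B :=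
    eq_of_subset_of_ncard_le (bd.grayPart_mono hAB)
      (by rw [hA.ncard_grayPart hp hn, hB.ncard_grayPart (hAB hp) hn])
      (hB.1.subset (sep_subset _ _))
  rw [← bd.whitePart_union_grayPart A, ← bd.whitePart_union_grayPart B, hW, hG]

namespace IsBlockPartition

variable {bd : Board} {blocks : Set (Set Cell)} {area : Set Cell}

lemma subset_of_mem (h : IsBlockPartition bd blocks area) {B : Set Cell} (hB : B ∈ blocks) :
    B ⊆ area :=
  h.2.2 ▸ subset_sUnion_of_mem hB

lemma exists_mem (h : IsBlockPartition bd blocks area) {p : Cell} (hp : p ∈ area) :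
    ∃ B ∈ blocks, p ∈ B :=
  mem_sUnion.1 (h.2.2 ▸ hp)

lemma eq_of_whitePart_subset (h : IsBlockPartition bd blocks area) {B B' C : Set Cell}
    (hB : B ∈ blocks) (hB' : B' ∈ blocks) (hC : C.Finite)
    (hBC : bd.whitePart B ⊆ C) (hB'C : bd.whitePart B' ⊆ C)
    (hcard : C.ncard < (bd.whitePart B).ncard + (bd.whitePart B').ncard) : B = B' := by
  by_contra hne
  have hdisj : Disjoint (bd.whitePart B) (bd.whitePart B') :=
    (h.2.1 hB hB' hne).mono (sep_subset _ _) (sep_subset _ _)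
  have hle := ncard_le_ncard (union_subset hBC hB'C) hC
  rw [ncard_union_eq hdisj (hC.subset hBC) (hC.subset hB'C)] at hle
  omega

end IsBlockPartition

lemma wbBoard_clue_eq_some {p : Cell} {n : ℕ} (h : wbBoard.clue p = some n) :
    p.2 ≠ 2 ∧ n = 2 := by
  by_cases hp : p.2 = 2 <;> simp_all [wbBoard, eq_comm]

lemma wbBoard_clue_of_ne {p : Cell} (h : p.2 ≠ 2) : wbBoard.clue p = some 2 := by
  simp [wbBoard, h]

lemma wbBoard_whitePart_wireRow (j : ℤ) : wbBoard.whitePart (wireRow j) = {(0, j)} := by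
  ext ⟨x, y⟩
  simp only [Board.whitePart, wbBoard, wireRow, mem_insert_iff, mem_singleton_iff,
    Prod.ext_iff, mem_ofPred_eq, decide_eq_true_eq]
  omega

lemma wbBoard_grayPart_wireRow (j : ℤ) : wbBoard.grayPart (wireRow j) = {(1, j)} := by
  ext ⟨x, y⟩
  simp only [Board.grayPart, wbBoard, wireRow, mem_insert_iff, mem_singleton_iff,
    Prod.ext_iff, mem_ofPred_eq, decide_eq_false_iff_not]
  omega

lemma connectedIn_wireRow (j : ℤ) : ConnectedIn (wireRow j) := by
  rw [wireRow, ← singleton_union]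
  exact (connectedIn_singleton _).union (connectedIn_singleton _) rfl rfl
    (by simpa using cellAdj_add_one_fst 0 j)

lemma finite_wireRow (j : ℤ) : (wireRow j).Finite :=
  toFinite {((0 : ℤ), j), ((1 : ℤ), j)}

lemma validBlock_wireRow_union_wireRow_add_one (j : ℤ) :
    ValidBlock wbBoard (wireRow j ∪ wireRow (j + 1)) := by
  have hW : wbBoard.whitePart (wireRow j ∪ wireRow (j + 1)) = {(0, j)} ∪ {(0, j + 1)} := by
    rw [Board.whitePart_union, wbBoard_whitePart_wireRow, wbBoard_whitePart_wireRow]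
  have hG : wbBoard.grayPart (wireRow j ∪ wireRow (j + 1)) = {(1, j)} ∪ {(1, j + 1)} := by
    rw [Board.grayPart_union, wbBoard_grayPart_wireRow, wbBoard_grayPart_wireRow]
  have hconn : ConnectedIn (wireRow j ∪ wireRow (j + 1)) :=
    (connectedIn_wireRow j).union (connectedIn_wireRow (j + 1)) (a := (0, j)) (b := (0, j + 1))
      (by simp [wireRow]) (by simp [wireRow]) (cellAdj_add_one_snd 0 j)
  refine ⟨(finite_wireRow j).union (finite_wireRow _), hconn, ?_, ?_, ?_, ?_, ?_, ?_⟩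
  · simp [hW]
  · simp [hG]
  · rw [hW]
    exact (connectedIn_singleton _).union (connectedIn_singleton _) rfl rfl
      (cellAdj_add_one_snd 0 j)
  · rw [hG]
    exact (connectedIn_singleton _).union (connectedIn_singleton _) rfl rfl
      (cellAdj_add_one_snd 1 j)
  · rw [hW, hG]
    convert congruentCells_image_add _ (1, 0) using 1
    simp only [image_union, image_singleton, Prod.mk_add_mk, zero_add, add_zero]
  · intro p _ n hn
    obtain ⟨-, rfl⟩ := wbBoard_clue_eq_some hn
    rw [hW, hG, singleton_union, singleton_union]
    exact ⟨ncard_pair (by simp), ncard_pair (by simp)⟩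

lemma validBlock_wireRow_two : ValidBlock wbBoard (wireRow 2) := by
  refine ⟨finite_wireRow 2, connectedIn_wireRow 2, ?_, ?_, ?_, ?_, ?_, ?_⟩
  · simp [wbBoard_whitePart_wireRow]
  · simp [wbBoard_grayPart_wireRow]
  · simpa only [wbBoard_whitePart_wireRow] using connectedIn_singleton _
  · simpa only [wbBoard_grayPart_wireRow] using connectedIn_singleton _
  · rw [wbBoard_whitePart_wireRow, wbBoard_grayPart_wireRow]
    convert congruentCells_image_add _ (1, 0) using 1
    simp only [image_singleton, Prod.mk_add_mk, zero_add, add_zero]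
  · rintro p hp n hn
    have hp2 : p.2 = 2 := by rcases hp with rfl | rfl <;> rfl
    exact absurd hp2 (wbBoard_clue_eq_some hn).1

lemma disjoint_wireRow {i j : ℤ} (h : i ≠ j) : Disjoint (wireRow i) (wireRow j) := by
  simp [wireRow, h.symm]

lemma wbGadget_area : wbGadget.area = wireRow 0 ∪ wireRow 1 ∪ wireRow 2 := by
  simp [Gadget.area, wbGadget]

lemma wbBoard_whitePart_wireRows :
    wbBoard.whitePart (wireRow 0 ∪ wireRow 1 ∪ wireRow 2) = {(0, 0), (0, 1), (0, 2)} := by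
  simp only [Board.whitePart_union, wbBoard_whitePart_wireRow, singleton_union, insert_union]

lemma eq_wireRow_of_validBlock_of_subset {B : Set Cell} {j : ℤ} (hV : ValidBlock wbBoard B)
    (hB : B ⊆ wireRow j) : B = wireRow j := by
  obtain ⟨-, -, hWne, hGne, -⟩ := hV
  have hW : wbBoard.whitePart B = {(0, j)} :=
    hWne.subset_singleton_iff.1 (wbBoard_whitePart_wireRow j ▸ wbBoard.whitePart_mono hB)
  have hG : wbBoard.grayPart B = {(1, j)} :=
    hGne.subset_singleton_iff.1 (wbBoard_grayPart_wireRow j ▸ wbBoard.grayPart_mono hB)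
  rw [← wbBoard.whitePart_union_grayPart B, hW, hG, singleton_union, wireRow]

section Classification

variable {blocks : Set (Set Cell)} {area : Set Cell}

lemma wbBoard_block_eq_of_clue (h : IsBlockPartition wbBoard blocks area)
    (harea : area ⊆ wireRow 0 ∪ wireRow 1 ∪ wireRow 2) {B B' : Set Cell}
    (hB : B ∈ blocks) (hB' : B' ∈ blocks) {p p' : Cell} (hp : p ∈ B) (hp' : p' ∈ B')
    (hclue : p.2 ≠ 2) (hclue' : p'.2 ≠ 2) : B = B' := by
  have hsub {B} (hB : B ∈ blocks) :
      wbBoard.whitePart B ⊆ wbBoard.whitePart (wireRow 0 ∪ wireRow 1 ∪ wireRow 2) :=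
    fun q hq => ⟨harea (h.subset_of_mem hB hq.1), hq.2⟩
  rw [wbBoard_whitePart_wireRows] at hsub
  refine h.eq_of_whitePart_subset hB hB' (toFinite _) (hsub hB) (hsub hB') ?_
  rw [ncard_insert_of_notMem (by simp), ncard_pair (by simp),
    (h.1 B hB).ncard_whitePart hp (wbBoard_clue_of_ne hclue),
    (h.1 B' hB').ncard_whitePart hp' (wbBoard_clue_of_ne hclue')]
  norm_num

lemma wireRow_zero_union_one_mem (h : IsBlockPartition wbBoard blocks area)
    (hman : wireRow 0 ∪ wireRow 1 ⊆ area) (harea : area ⊆ wireRow 0 ∪ wireRow 1 ∪ wireRow 2) :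
    wireRow 0 ∪ wireRow 1 ∈ blocks := by
  have h00 : ((0 : ℤ), (0 : ℤ)) ∈ wireRow 0 ∪ wireRow 1 := by simp [wireRow]
  obtain ⟨B, hB, h00B⟩ := h.exists_mem (hman h00)
  have hsub : wireRow 0 ∪ wireRow 1 ⊆ B := fun p hp => by
    obtain ⟨B', hB', hpB'⟩ := h.exists_mem (hman hp)
    have hp2 : p.2 ≠ 2 := by rcases hp with (rfl | rfl) | (rfl | rfl) <;> decide
    rwa [wbBoard_block_eq_of_clue h harea hB hB' h00B hpB' (by decide) hp2]
  have hV : ValidBlock wbBoard (wireRow 0 ∪ wireRow 1) :=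
    validBlock_wireRow_union_wireRow_add_one 0
  rwa [hV.eq_of_subset (h.1 B hB) hsub h00 (wbBoard_clue_of_ne (by decide))]

lemma eq_wireRow_two_of_mem (h : IsBlockPartition wbBoard blocks area)
    (harea : area ⊆ wireRow 0 ∪ wireRow 1 ∪ wireRow 2) (hR : wireRow 0 ∪ wireRow 1 ∈ blocks)
    {B : Set Cell} (hB : B ∈ blocks) (hne : B ≠ wireRow 0 ∪ wireRow 1) : B = wireRow 2 :=
  eq_wireRow_of_validBlock_of_subset (h.1 B hB) fun _ hp =>
    (harea (h.subset_of_mem hB hp)).resolve_left (disjoint_left.1 (h.2.1 hB hR hne) hp)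

lemma wbBoard_blockPartition_cases (h : IsBlockPartition wbBoard blocks area)
    (hman : wireRow 0 ∪ wireRow 1 ⊆ area) (harea : area ⊆ wireRow 0 ∪ wireRow 1 ∪ wireRow 2) :
    (area = wireRow 0 ∪ wireRow 1 ∪ wireRow 2 ∧
        blocks = {wireRow 0 ∪ wireRow 1, wireRow 2}) ∨
      (area = wireRow 0 ∪ wireRow 1 ∧ blocks = {wireRow 0 ∪ wireRow 1}) := by
  have hR := wireRow_zero_union_one_mem h hman harea
  have hblocks : blocks ⊆ {wireRow 0 ∪ wireRow 1, wireRow 2} := fun B hB =>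
    (em _).imp id (eq_wireRow_two_of_mem h harea hR hB)
  by_cases h2 : wireRow 2 ∈ blocks
  · have hb : blocks = {wireRow 0 ∪ wireRow 1, wireRow 2} :=
      hblocks.antisymm (insert_subset hR (singleton_subset_iff.2 h2))
    exact .inl ⟨by rw [← h.2.2, hb, sUnion_pair], hb⟩
  · have hb : blocks = {wireRow 0 ∪ wireRow 1} :=
      subset_antisymm (fun B hB => (hblocks hB).resolve_right fun e => h2 (e ▸ hB))
        (singleton_subset_iff.2 hR)
    exact .inr ⟨by rw [← h.2.2, hb, sUnion_singleton], hb⟩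

end Classification

lemma disjoint_wireRow_zero_union_one_wireRow_two :
    Disjoint (wireRow 0 ∪ wireRow 1) (wireRow 2) :=
  (disjoint_wireRow (by norm_num)).union_left (disjoint_wireRow (by norm_num))

lemma isGadgetSolution_wbGadget_wireRows :
    IsGadgetSolution wbGadget (wireRow 0 ∪ wireRow 1 ∪ wireRow 2)
      {wireRow 0 ∪ wireRow 1, wireRow 2} := by
  refine ⟨subset_union_left, wbGadget_area.superset, ?_, ?_, ?_, sUnion_pair _ _⟩
  · rintro O rfl
    exact .inl subset_union_right
  · rintro B (rfl | rfl)
    exacts [validBlock_wireRow_union_wireRow_add_one 0, validBlock_wireRow_two]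
  · exact pairwise_pair.2 fun _ => ⟨disjoint_wireRow_zero_union_one_wireRow_two,
      disjoint_wireRow_zero_union_one_wireRow_two.symm⟩

lemma isGadgetSolution_wbGadget_mandatory :
    IsGadgetSolution wbGadget (wireRow 0 ∪ wireRow 1) {wireRow 0 ∪ wireRow 1} := by
  refine ⟨subset_rfl, wbGadget_area ▸ subset_union_left, ?_, ?_,
    pairwiseDisjoint_singleton _ _, sUnion_singleton _⟩
  · rintro O rfl
    exact .inr disjoint_wireRow_zero_union_one_wireRow_two.symm
  · rintro B rfl
    exact validBlock_wireRow_union_wireRow_add_one 0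

lemma union_singleton_ne_of_mem_wireRow_two {c : Cell} (hc : c ∈ wireRow 2) :
    wireRow 0 ∪ wireRow 1 ∪ {c} ≠ wireRow 0 ∪ wireRow 1 ∪ wireRow 2 ∧
      wireRow 0 ∪ wireRow 1 ∪ {c} ≠ wireRow 0 ∪ wireRow 1 := by
  refine ⟨fun hA => ?_, fun hA => ?_⟩
  · have h02 : ((0 : ℤ), (2 : ℤ)) ∈ wireRow 0 ∪ wireRow 1 ∪ {c} := hA ▸ by simp [wireRow]
    have h12 : ((1 : ℤ), (2 : ℤ)) ∈ wireRow 0 ∪ wireRow 1 ∪ {c} := hA ▸ by simp [wireRow]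
    simp only [wireRow, mem_union, mem_insert_iff, mem_singleton_iff] at h02 h12
    grind
  · have hc' : c ∈ wireRow 0 ∪ wireRow 1 := hA ▸ .inr rfl
    rcases hc with rfl | rfl <;> simp [wireRow] at hc'

/-- The wire boundary gadget has exactly two gadget solutions: (i) all six cells,
    partitioned into the 2×2 block of rows 0 and 1 plus the 1×2 block of row 2 (covering
    the optional area), and (ii) the single 2×2 block of rows 0 and 1 (covering only the
    mandatory area).  In particular, no set of valid blocks tiles the mandatory area
    together with exactly one cell of the optional area. -/
theorem wire_boundary_profile_table_complete :
    (∀ (area : Set Cell) (blocks : Set (Set Cell)),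
      IsGadgetSolution wbGadget area blocks ↔
        (area = wireRow 0 ∪ wireRow 1 ∪ wireRow 2 ∧
          blocks = {wireRow 0 ∪ wireRow 1, wireRow 2}) ∨
        (area = wireRow 0 ∪ wireRow 1 ∧ blocks = {wireRow 0 ∪ wireRow 1})) ∧
    (∀ c ∈ wireRow 2,
      ¬ ∃ blocks : Set (Set Cell),
          IsBlockPartition wbBoard blocks (wireRow 0 ∪ wireRow 1 ∪ {c})) := by
  refine ⟨fun area blocks => ⟨?_, ?_⟩, ?_⟩
  · rintro ⟨hman, harea, -, h⟩
    exact wbBoard_blockPartition_cases h hman (wbGadget_area ▸ harea)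
  · rintro (⟨rfl, rfl⟩ | ⟨rfl, rfl⟩)
    exacts [isGadgetSolution_wbGadget_wireRows, isGadgetSolution_wbGadget_mandatory]
  · rintro c hc ⟨blocks, h⟩
    obtain ⟨hne_wireRows, hne_mandatory⟩ := union_singleton_ne_of_mem_wireRow_two hc
    rcases wbBoard_blockPartition_cases h subset_union_left
      (union_subset_union_right _ (singleton_subset_iff.2 hc)) with ⟨hA, -⟩ | ⟨hA, -⟩
    exacts [hne_wireRows hA, hne_mandatory hA]
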